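/- arXiv:1803.09239 — 2 statements merged into one kernel-verified Lean document; each statement's English description precedes it below -/
import Mathlib

section
/- If j: G → Ĝ is a bijection such that P = (j̃ ∘ F)² is a permutation operator (i.e., P(f) = f ∘ p for some bijection p: G → G and all f ∈ ℂ^G), then j is a group isomorphism and p = ĵ⁻¹ ∘ j. -/
/-- The normalized Fourier transform `F : ℂ^G → ℂ^Ĝ`. -/
noncomputable def fourierTransform (G : Type*) [CommGroup G] [Fintype G] (f : G → ℂ)
    (χ : G →* Circle) : ℂ :=
  (Real.sqrt (Fintype.card G) : ℂ)⁻¹ * ∑ g : G, f g * χ g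

/-- `j̃ ∘ F : ℂ^G → ℂ^G`, where `j̃` is the pullback by `j : G → Ĝ`. -/
noncomputable def pullbackFourier (G : Type*) [CommGroup G] [Fintype G]
    (j : G → (G →* Circle)) (f : G → ℂ) (g : G) : ℂ :=
  fourierTransform G f (j g)

open Classical in
lemma key (G : Type*) [CommGroup G] [Fintype G]
    (j : G → (G →* Circle)) (p : G → G)
    (hP : ∀ (f : G → ℂ) (g : G),
      pullbackFourier G j (pullbackFourier G j f) g = f (p g))
    (g x₀ : G) :
    ∑ h : G, (j h x₀ : ℂ) * (j g h : ℂ)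
      = if p g = x₀ then (Fintype.card G : ℂ) else 0 := by
  have hn : 0 < (Fintype.card G : ℝ) := by positivity
  have hcc : ((Real.sqrt (Fintype.card G) : ℂ))⁻¹ * ((Real.sqrt (Fintype.card G) : ℂ))⁻¹
      = ((Fintype.card G : ℂ))⁻¹ := by
    rw [← mul_inv]
    congr 1
    rw [← Complex.ofReal_mul, Real.mul_self_sqrt hn.le]
    norm_num
  have h := hP (fun y => if y = x₀ then 1 else 0) g
  simp only [pullbackFourier, fourierTransform] at h
  have hinner : ∀ h' : G, ∑ x : G, (if x = x₀ then (1:ℂ) else 0) * (j h' x : ℂ)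
      = (j h' x₀ : ℂ) := by
    intro h'
    rw [Finset.sum_eq_single x₀] <;> simp +contextual
  simp only [hinner] at h
  simp only [mul_assoc] at h
  rw [← Finset.mul_sum, ← mul_assoc, hcc] at h
  have hcard : ((Fintype.card G : ℂ)) ≠ 0 := by
    exact_mod_cast Complex.ofReal_ne_zero.mpr hn.ne'
  -- h : (card)⁻¹ * ∑ h', j h' x₀ * j g h' = if p g = x₀ then 1 else 0
  rw [mul_comm, mul_inv_eq_iff_eq_mul₀ hcard] at h
  rw [h]
  split <;> simp [mul_comm]

/-- If `j : G → Ĝ` is a bijection such that `P = (j̃ ∘ F)²` is a permutation operator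
`P f = f ∘ p`, then `j` is a group isomorphism and `p = ĵ⁻¹ ∘ j`
(i.e. `ĵ ∘ p = j` where `ĵ(h)(x) = conj (j x h)`). -/
theorem perm_implies_isom (G : Type*) [CommGroup G] [Fintype G]
    (j : G → (G →* Circle)) (hj : Function.Bijective j)
    (p : G → G) (hp : Function.Bijective p)
    (hP : ∀ (f : G → ℂ) (g : G),
      pullbackFourier G j (pullbackFourier G j f) g = f (p g)) :
    (∀ x y : G, j (x * y) = j x * j y) ∧
      ∀ g x : G, (starRingEnd ℂ) (j x (p g) : ℂ) = (j g x : ℂ) := by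
  classical
  have key' := key G j p hP
  -- Step 1: each term in the diagonal sum equals 1
  have step1 : ∀ g h : G, (j h (p g) : ℂ) * (j g h : ℂ) = 1 := by
    intro g h
    have hs := key' g (p g)
    rw [if_pos rfl] at hs
    set z : G → ℂ := fun h => (j h (p g) : ℂ) * (j g h : ℂ) with hz
    have habs : ∀ h, ‖z h‖ = 1 := by
      intro h; simp [hz, map_mul, Circle.norm_coe]
    have hre : ∑ h : G, (z h).re = (Fintype.card G : ℝ) := by
      have := congrArg Complex.re hs
      simpa only [Complex.re_sum, Complex.natCast_re] using this
    have hle : ∀ i ∈ Finset.univ, (z i).re ≤ (fun _ : G => (1:ℝ)) i := by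
      intro i _
      calc (z i).re ≤ ‖z i‖ := Complex.re_le_norm _
        _ = 1 := habs i
    have heq : ∀ i ∈ Finset.univ, (z i).re = 1 := by
      rw [← Finset.sum_eq_sum_iff_of_le hle]
      simp [hre, Finset.card_univ]
    have h1 : (z h).re = 1 := heq h (Finset.mem_univ h)
    have h2 : Complex.normSq (z h) = 1 := by
      rw [Complex.normSq_eq_norm_sq, habs]; norm_num
    have him : (z h).im = 0 := by
      have h3 := Complex.normSq_apply (z h)
      nlinarith
    have : z h = 1 := Complex.ext (by simp [h1]) (by simp [him])
    simpa [hz] using this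
  -- Step 2: the second conjunct
  have step2 : ∀ g x : G, (starRingEnd ℂ) (j x (p g) : ℂ) = (j g x : ℂ) := by
    intro g x
    have h1 := step1 g x
    have h2 : (starRingEnd ℂ) ((j x (p g) : ℂ)) * (j x (p g) : ℂ) = 1 := by
      rw [mul_comm, Complex.mul_conj, Complex.normSq_eq_norm_sq]
      simp [Circle.norm_coe]
    calc (starRingEnd ℂ) ((j x (p g) : ℂ))
        = (starRingEnd ℂ) ((j x (p g) : ℂ)) * ((j x (p g) : ℂ) * (j g x : ℂ)) := by
          rw [h1, mul_one]
      _ = ((starRingEnd ℂ) ((j x (p g) : ℂ)) * (j x (p g) : ℂ)) * (j g x : ℂ) := by ring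
      _ = (j g x : ℂ) := by rw [h2, one_mul]
  refine ⟨fun x y => ?_, step2⟩
  ext a
  obtain ⟨g, rfl⟩ := hp.2 a
  have e : ∀ u : G, (j u (p g) : ℂ) = (starRingEnd ℂ) (j g u : ℂ) := by
    intro u
    have := congrArg (starRingEnd ℂ) (step2 g u)
    simpa using this
  rw [MonoidHom.mul_apply, Circle.coe_mul, e (x * y), e x, e y, map_mul,
    Circle.coe_mul, map_mul]
end

section
/- If j: G → Ĝ is a group isomorphism, then P = (j̃ ∘ F)² satisfies P(f)(g) = f(ĵ⁻¹(j(g))) for every f ∈ ℂ^G and g ∈ G; in particular P is a permutation operator induced by the automorphism p = ĵ⁻¹ ∘ j of G. -/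
open scoped Classical in
/-- Orthogonality: the sum of a character over the group is `|G|` if the character is
trivial, and `0` otherwise. -/
lemma char_sum_eq (G : Type*) [CommGroup G] [Fintype G] (χ : G →* Circle) :
    ∑ x : G, (χ x : ℂ) = if χ = 1 then (Fintype.card G : ℂ) else 0 := by
  split_ifs with h
  · subst h; simp
  · have : ∃ a : G, χ a ≠ 1 := by
      by_contra hc
      push_neg at hc
      exact h (MonoidHom.ext fun a => hc a)
    obtain ⟨a, ha⟩ := this
    have key : (χ a : ℂ) * ∑ x : G, (χ x : ℂ) = ∑ x : G, (χ x : ℂ) := by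
      rw [Finset.mul_sum]
      refine Fintype.sum_equiv (Equiv.mulLeft a) _ _ fun x => ?_
      simp [map_mul]
    have ha' : (χ a : ℂ) ≠ 1 := by
      simpa [Circle.coe_eq_one] using ha
    have h0 : ((χ a : ℂ) - 1) * ∑ x : G, (χ x : ℂ) = 0 := by
      rw [sub_mul, one_mul, key, sub_self]
    rcases mul_eq_zero.mp h0 with h' | h'
    · exact absurd (sub_eq_zero.mp h') ha'
    · exact h'

/-- If `j : G → Ĝ` is a group isomorphism, then `P = (j̃ ∘ F)²` is the permutation operator
induced by the automorphism `p = ĵ⁻¹ ∘ j` of `G`: `P f g = f (ĵ⁻¹ (j g))`. -/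
theorem isom_implies_perm (G : Type*) [CommGroup G] [Fintype G]
    (j : G → (G →* Circle)) (hj : Function.Bijective j)
    (hhom : ∀ x y : G, j (x * y) = j x * j y) :
    ∃ p : G ≃* G,
      (∀ g x : G, (starRingEnd ℂ) (j x (p g) : ℂ) = (j g x : ℂ)) ∧
      ∀ (f : G → ℂ) (g : G),
        pullbackFourier G j (pullbackFourier G j f) g = f (p g) := by
  classical
  have cardpos : 0 < (Fintype.card G : ℝ) := by exact_mod_cast Fintype.card_pos
  have cardne : (Fintype.card G : ℂ) ≠ 0 := by exact_mod_cast Fintype.card_pos.ne'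
  have j1 : j 1 = 1 := by
    have h := hhom 1 1
    rw [mul_one] at h
    exact left_eq_mul.mp h
  -- Φ : the dual pairing in the other variable, Φ y = (x ↦ j x y)
  set Φ : G →* (G →* Circle) := MonoidHom.mk'
    (fun y => MonoidHom.mk' (fun x => j x y) (by
      intro a b
      show j (a * b) y = j a y * j b y
      rw [hhom]; rfl))
    (by
      intro a b
      ext x
      exact congrArg (fun z : Circle => (z : ℂ)) (map_mul (j x) a b)) with hΦ
  have Φapp : ∀ x y : G, Φ y x = j x y := fun _ _ => rfl
  -- nondegeneracy: Φ is injective, via a counting argument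
  have hΦinj : Function.Injective Φ := by
    rw [injective_iff_map_eq_one]
    intro h hh
    have hT1 : ∑ x : G, ∑ y : G, ((j x) y : ℂ) = (Fintype.card G : ℂ) := by
      have e1 : ∀ x : G, ∑ y : G, ((j x) y : ℂ) = if x = 1 then (Fintype.card G : ℂ) else 0 := by
        intro x
        rw [char_sum_eq]
        congr 1
        simp only [eq_iff_iff]
        constructor
        · intro hx; exact hj.1 (by rw [hx, j1])
        · intro hx; rw [hx, j1]
      rw [Finset.sum_congr rfl fun x _ => e1 x]
      simp
    have hT2 : ∑ x : G, ∑ y : G, ((j x) y : ℂ) =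
        ((Finset.univ.filter fun y : G => Φ y = 1).card : ℂ) * (Fintype.card G : ℂ) := by
      rw [Finset.sum_comm]
      have e2 : ∀ y : G, ∑ x : G, ((j x) y : ℂ) = if Φ y = 1 then (Fintype.card G : ℂ) else 0 := by
        intro y
        rw [← char_sum_eq G (Φ y)]
        exact Finset.sum_congr rfl fun x _ => rfl
      rw [Finset.sum_congr rfl fun y _ => e2 y, ← Finset.sum_filter]
      rw [Finset.sum_const, nsmul_eq_mul]
    have hcard : ((Finset.univ.filter fun y : G => Φ y = 1).card : ℂ) = 1 :=
      mul_right_cancel₀ cardne (by rw [one_mul, ← hT2, hT1])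
    have hcard' : (Finset.univ.filter fun y : G => Φ y = 1).card = 1 := by
      exact_mod_cast hcard
    have h1mem : (1 : G) ∈ Finset.univ.filter fun y : G => Φ y = 1 := by
      simp [map_one]
    have hhmem : h ∈ Finset.univ.filter fun y : G => Φ y = 1 := by
      simp [hh]
    exact Finset.card_le_one.mp hcard'.le h hhmem 1 h1mem
  letI : Fintype (G →* Circle) := Fintype.ofBijective j hj
  have hΦbij : Function.Bijective Φ := by
    rw [Fintype.bijective_iff_injective_and_card]
    exact ⟨hΦinj, Fintype.card_of_bijective hj⟩
  -- the hom g ↦ (j g)⁻¹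
  set ψ : G →* (G →* Circle) := MonoidHom.mk' (fun g => (j g)⁻¹) (by
    intro a b
    show (j (a * b))⁻¹ = (j a)⁻¹ * (j b)⁻¹
    rw [hhom, mul_inv]) with hψ
  have hψbij : Function.Bijective ψ := by
    have : (ψ : G → (G →* Circle)) = (fun χ => χ⁻¹) ∘ j := rfl
    rw [this]
    exact (Equiv.inv (G →* Circle)).bijective.comp hj
  set Φe := MulEquiv.ofBijective Φ hΦbij with hΦe
  set ψe := MulEquiv.ofBijective ψ hψbij with hψe
  set p : G ≃* G := ψe.trans Φe.symm with hpdef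
  have hΦp : ∀ g : G, Φ (p g) = (j g)⁻¹ := by
    intro g
    show Φe (Φe.symm (ψe g)) = (j g)⁻¹
    rw [MulEquiv.apply_symm_apply]
    rfl
  have hp : ∀ g x : G, j x (p g) = (j g x)⁻¹ := by
    intro g x
    calc j x (p g) = Φ (p g) x := rfl
      _ = ((j g)⁻¹ : G →* Circle) x := by rw [hΦp]
      _ = (j g x)⁻¹ := rfl
  refine ⟨p, ?_, ?_⟩
  · intro g x
    rw [← Circle.coe_inv_eq_conj, hp g x, inv_inv]
  · intro f g
    simp only [pullbackFourier, fourierTransform]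
    set c : ℂ := ((Real.sqrt (Fintype.card G) : ℝ) : ℂ)⁻¹ with hc
    have hcc : c * c * (Fintype.card G : ℂ) = 1 := by
      rw [hc, ← mul_inv]
      norm_cast
      rw [Real.mul_self_sqrt cardpos.le]
      push_cast
      field_simp
    have step : ∀ x : G, (c * ∑ y : G, f y * (j x y : ℂ)) * (j g x : ℂ)
        = c * ∑ y : G, f y * ((Φ y * j g) x : ℂ) := by
      intro x
      rw [mul_assoc, Finset.sum_mul]
      congr 1
      refine Finset.sum_congr rfl fun y _ => ?_
      rw [mul_assoc]
      congr 1
    rw [Finset.sum_congr rfl fun x _ => step x, ← Finset.mul_sum, Finset.sum_comm]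
    have inner : ∀ y : G, ∑ x : G, f y * ((Φ y * j g) x : ℂ)
        = if y = p g then f y * (Fintype.card G : ℂ) else 0 := by
      intro y
      rw [← Finset.mul_sum, char_sum_eq]
      have hiff : Φ y * j g = 1 ↔ y = p g := by
        constructor
        · intro h
          exact hΦinj (by rw [hΦp, mul_eq_one_iff_eq_inv] at *; exact h)
        · intro h
          subst h
          rw [hΦp, inv_mul_cancel]
      split_ifs with h1 h2 h2
      · rfl
      · exact absurd (hiff.mp h1) h2
      · exact absurd (hiff.mpr h2) h1
      · rw [mul_zero]
    rw [Finset.sum_congr rfl fun y _ => inner y,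
      Finset.sum_ite_eq' Finset.univ (p g) (fun y => f y * (Fintype.card G : ℂ))]
    simp only [Finset.mem_univ, if_true]
    rw [show c * (c * (f (p g) * (Fintype.card G : ℂ)))
        = (c * c * (Fintype.card G : ℂ)) * f (p g) by ring, hcc, one_mul]
end
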